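/- (Reduction of the KODS Lagrangian to the dual objective.) Let X be a real d×n matrix, 𝕂 = XᵀX, η ∈ ℝ, and let Y, Z be K×n real matrices satisfying (Y − Z)1ₙ = 0. Set W₁ = XZᵀ, W₂ = −XYᵀ, and let b₁, b₂ ∈ ℝ^K satisfy b₁ − b₂ = Y1ₙ. Then the Lagrangian L(W₁, W₂, b₁, b₂, Y, Z) = −tr(W₁ᵀW₂) + ½‖b₁ − b₂‖² + tr(Yᵀ(η 1_{K×n} − W₁ᵀX − b₁1ₙᵀ)) + tr(Zᵀ(W₂ᵀX + b₂1ₙᵀ + η 1_{K×n})) evaluates to L = −(½ 1ₙᵀ Yᵀ Y 1ₙ + tr(Y 𝕂 Zᵀ) − η tr((Y + Z)ᵀ 1_{K×n})); i.e., the Lagrangian at these substitutions equals the negative of the KODS dual objective. -/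

import Mathlib

open Matrix
open scoped Matrix

/-! Since `Z1ₙ = Y1ₙ = b₁ − b₂`, the two bias terms combine to `−‖Y1ₙ‖²`, which together with
`½‖b₁ − b₂‖²` leaves `−½ 1ₙᵀYᵀY1ₙ`. By cyclicity of the trace and symmetry of `𝕂`, each of the
three quadratic terms in `X` equals `± tr(Y𝕂Zᵀ)`, with signs `+, −, −`. -/

namespace Matrix

variable {m n R : Type*} [Fintype m] [Fintype n] [CommSemiring R]

theorem trace_transpose_mul_vecMulVec (A : Matrix m n R) (b : m → R) (v : n → R) :
    trace (Aᵀ * vecMulVec b v) = b ⬝ᵥ (A *ᵥ v) := by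
  rw [mul_vecMulVec, trace_vecMulVec, mulVec_transpose, dotProduct_mulVec]

theorem trace_mul_mul_transpose_comm {M : Matrix n n R} (hM : M.IsSymm) (Y Z : Matrix m n R) :
    trace (Z * M * Yᵀ) = trace (Y * M * Zᵀ) := by
  rw [← trace_transpose, transpose_mul, transpose_mul, hM.eq, transpose_transpose,
    Matrix.mul_assoc]

end Matrix

theorem kods_lagrangian_eq_neg_dual_general {d n K : ℕ}
    (X : Matrix (Fin d) (Fin n) ℝ) (η : ℝ)
    (Y Z : Matrix (Fin K) (Fin n) ℝ) (b₁ b₂ : Fin K → ℝ)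
    (ones : Fin n → ℝ)
    (J : Matrix (Fin K) (Fin n) ℝ)
    (hYZ : (Y - Z) *ᵥ ones = 0)
    (hb : b₁ - b₂ = Y *ᵥ ones) :
    - Matrix.trace ((X * Zᵀ)ᵀ * (-(X * Yᵀ)))
      + (1 / 2) * ((b₁ - b₂) ⬝ᵥ (b₁ - b₂))
      + Matrix.trace (Yᵀ * (η • J - (X * Zᵀ)ᵀ * X - Matrix.vecMulVec b₁ ones))
      + Matrix.trace (Zᵀ * ((-(X * Yᵀ))ᵀ * X + Matrix.vecMulVec b₂ ones + η • J))
    = -((1 / 2) * ((Y *ᵥ ones) ⬝ᵥ (Y *ᵥ ones))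
        + Matrix.trace (Y * (Xᵀ * X) * Zᵀ)
        - η * Matrix.trace ((Y + Z)ᵀ * J)) := by
  have hZ : Z *ᵥ ones = Y *ᵥ ones := (sub_eq_zero.mp (sub_mulVec Y Z ones ▸ hYZ)).symm
  have hbias : b₁ ⬝ᵥ (Y *ᵥ ones) - b₂ ⬝ᵥ (Y *ᵥ ones) = (Y *ᵥ ones) ⬝ᵥ (Y *ᵥ ones) := by
    rw [← sub_dotProduct, hb]
  have hGram : (Xᵀ * X).IsSymm := transpose_mul _ _
  have hW : trace ((X * Zᵀ)ᵀ * (X * Yᵀ)) = trace (Y * (Xᵀ * X) * Zᵀ) := by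
    rw [← trace_mul_mul_transpose_comm hGram]
    simp only [transpose_mul, transpose_transpose, Matrix.mul_assoc]
  have hYK : trace (Yᵀ * ((X * Zᵀ)ᵀ * X)) = trace (Y * (Xᵀ * X) * Zᵀ) := by
    rw [trace_mul_comm, ← hW]
    simp only [Matrix.mul_assoc]
  have hZK : trace (Zᵀ * ((X * Yᵀ)ᵀ * X)) = trace (Y * (Xᵀ * X) * Zᵀ) := by
    rw [trace_mul_comm]
    simp only [transpose_mul, transpose_transpose, Matrix.mul_assoc]
  rw [hb]
  simp only [Matrix.mul_neg, Matrix.neg_mul, transpose_neg, Matrix.mul_add, Matrix.mul_sub,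
    trace_add, trace_sub, trace_neg, Matrix.mul_smul, trace_smul, smul_eq_mul, transpose_add,
    Matrix.add_mul, trace_transpose_mul_vecMulVec, hW, hYK, hZK, hZ]
  linarith

/-- **Reduction of the KODS Lagrangian to the dual objective.**
With `𝕂 = XᵀX`, `(Y − Z)1ₙ = 0`, `W₁ = XZᵀ`, `W₂ = −XYᵀ`, and `b₁ − b₂ = Y1ₙ`, the
Lagrangian `L = −tr(W₁ᵀW₂) + ½‖b₁−b₂‖² + tr(Yᵀ(η1_{K×n} − W₁ᵀX − b₁1ₙᵀ))
+ tr(Zᵀ(W₂ᵀX + b₂1ₙᵀ + η1_{K×n}))` equals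
`−(½ 1ₙᵀYᵀY1ₙ + tr(Y𝕂Zᵀ) − η tr((Y+Z)ᵀ1_{K×n}))`, the negative of the KODS dual
objective. -/
theorem kods_lagrangian_eq_neg_dual {d n K : ℕ}
    (X : Matrix (Fin d) (Fin n) ℝ) (η : ℝ)
    (Y Z : Matrix (Fin K) (Fin n) ℝ) (b₁ b₂ : Fin K → ℝ)
    (ones : Fin n → ℝ) (hones : ones = fun _ => 1)
    (J : Matrix (Fin K) (Fin n) ℝ) (hJ : J = fun _ _ => 1)
    (hYZ : (Y - Z) *ᵥ ones = 0)
    (hb : b₁ - b₂ = Y *ᵥ ones) :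
    - Matrix.trace ((X * Zᵀ)ᵀ * (-(X * Yᵀ)))
      + (1 / 2) * ((b₁ - b₂) ⬝ᵥ (b₁ - b₂))
      + Matrix.trace (Yᵀ * (η • J - (X * Zᵀ)ᵀ * X - Matrix.vecMulVec b₁ ones))
      + Matrix.trace (Zᵀ * ((-(X * Yᵀ))ᵀ * X + Matrix.vecMulVec b₂ ones + η • J))
    = -((1 / 2) * ((Y *ᵥ ones) ⬝ᵥ (Y *ᵥ ones))
        + Matrix.trace (Y * (Xᵀ * X) * Zᵀ)
        - η * Matrix.trace ((Y + Z)ᵀ * J)) :=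
  kods_lagrangian_eq_neg_dual_general X η Y Z b₁ b₂ ones J hYZ hb
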